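/- arXiv:1912.11398 — 2 statements merged into one kernel-verified Lean document; each statement's English description precedes it below -/
import Mathlib

section
/- Let n₁ ≥ n₂ ≥ ... ≥ n_G > 0 be the group sizes sorted in decreasing order, s ∈ {1,...,G}, m₀ = Σ_{g≤s} n_g. Then for any nonnegative reals b₁ ≥ ... ≥ b_G: Σ_g sqrt(n_g)·b_g ≤ sqrt(m₀)·sqrt(Σ_{g≤s} b_g²) + sqrt(m₀/s)·Σ_{g>s} b_g. -/
theorem stmt8 (G : ℕ) (ns b : Fin G → ℝ)
    (hpos : ∀ g, 0 < ns g) (hsort : ∀ i j : Fin G, i ≤ j → ns j ≤ ns i)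
    (s : ℕ) (hs : 1 ≤ s) (hsG : s ≤ G)
    (hb : ∀ g, 0 ≤ b g) (hbs : ∀ i j : Fin G, i ≤ j → b j ≤ b i)
    (m0 : ℝ) (hm0 : m0 = ∑ g ∈ Finset.univ.filter (fun g : Fin G => (g : ℕ) < s), ns g) :
    ∑ g, Real.sqrt (ns g) * b g ≤
      Real.sqrt m0 *
        Real.sqrt (∑ g ∈ Finset.univ.filter (fun g : Fin G => (g : ℕ) < s), (b g) ^ 2)
      + Real.sqrt (m0 / s) *
        ∑ g ∈ Finset.univ.filter (fun g : Fin G => s ≤ (g : ℕ)), b g := by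
  classical
  set A := Finset.univ.filter (fun g : Fin G => (g : ℕ) < s) with hA
  set B := Finset.univ.filter (fun g : Fin G => s ≤ (g : ℕ)) with hB
  have hsplit : ∑ g, Real.sqrt (ns g) * b g
      = ∑ g ∈ A, Real.sqrt (ns g) * b g + ∑ g ∈ B, Real.sqrt (ns g) * b g := by
    rw [hA, hB]
    rw [← Finset.sum_filter_add_sum_filter_not Finset.univ (fun g : Fin G => (g : ℕ) < s)]
    congr 1
    apply Finset.sum_congr
    · ext g; simp [not_lt]
    · intros; rfl
  rw [hsplit]
  -- index i0 = s-1
  have hi0 : s - 1 < G := by omega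
  set i0 : Fin G := ⟨s - 1, hi0⟩ with hi0def
  -- card of A
  have hcardA : A.card = s := by
    rw [← Finset.card_range s]
    apply Finset.card_bij (fun (a : Fin G) _ => (a : ℕ))
    · intro a ha; rw [hA, Finset.mem_filter] at ha; simpa using ha.2
    · intro a _ a' _ h; exact Fin.ext h
    · intro c hc
      rw [Finset.mem_range] at hc
      exact ⟨⟨c, lt_of_lt_of_le hc hsG⟩, by rw [hA]; simp [hc], rfl⟩
  -- m0 ≥ s * ns i0
  have hm0ge : (s : ℝ) * ns i0 ≤ m0 := by
    rw [hm0, ← hcardA]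
    have h1 := Finset.card_nsmul_le_sum A (fun j => ns j) (ns i0) (by
      intro j hj
      apply hsort
      rw [hA, Finset.mem_filter] at hj
      have : (j : ℕ) ≤ (i0 : ℕ) := by simp [hi0def]; omega
      exact this)
    simpa [nsmul_eq_mul] using h1
  have hspos : (0:ℝ) < s := by exact_mod_cast hs
  have hm0pos : 0 < m0 := lt_of_lt_of_le (mul_pos hspos (hpos i0)) hm0ge
  have key : ns i0 ≤ m0 / s := by
    rw [le_div_iff₀ (by positivity)]
    linarith [hm0ge]
  have part2 : ∑ g ∈ B, Real.sqrt (ns g) * b g ≤ Real.sqrt (m0 / s) * ∑ g ∈ B, b g := by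
    rw [Finset.mul_sum]
    apply Finset.sum_le_sum
    intro g hg
    rw [hB, Finset.mem_filter] at hg
    have hle : ns g ≤ m0 / s := by
      refine le_trans (hsort i0 g ?_) key
      show (i0 : ℕ) ≤ (g : ℕ)
      simp [hi0def]; omega
    exact mul_le_mul_of_nonneg_right (Real.sqrt_le_sqrt hle) (hb g)
  have part1 : ∑ g ∈ A, Real.sqrt (ns g) * b g ≤
      Real.sqrt m0 * Real.sqrt (∑ g ∈ A, (b g) ^ 2) := by
    have := Real.sum_mul_le_sqrt_mul_sqrt A (fun g => Real.sqrt (ns g)) b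
    refine le_trans this ?_
    have : ∑ g ∈ A, Real.sqrt (ns g) ^ 2 = ∑ g ∈ A, ns g := by
      apply Finset.sum_congr rfl
      intro g _
      exact Real.sq_sqrt (hpos g).le
    rw [this, ← hm0]
  linarith
end

section
/- Let h ∈ ℝ^p, S₀ ⊂ {1,...,p} with |S₀| = k, and suppose κ‖h‖₂² ≤ (1/n)‖Xh‖₂² and (1/n)‖Xh‖₂² ≤ (λ/α)(√k·‖h_{S₀}‖₂ + ‖h_{S₀ᶜ}‖₁) + λ‖h_{S₀}‖₁ − λ‖h_{S₀ᶜ}‖₁ with α ≥ 2, κ, λ > 0. Then ‖h‖₂ ≤ 2λ√k/κ. -/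
theorem stmt12 (n p k : ℕ) (X : Matrix (Fin n) (Fin p) ℝ) (h : Fin p → ℝ)
    (S0 : Finset (Fin p)) (hcard : S0.card = k)
    (κ lam α : ℝ) (hα : 2 ≤ α) (hκ : 0 < κ) (hlam : 0 < lam)
    (h1 : κ * ∑ j, (h j) ^ 2 ≤ (1 / n) * ∑ i, (X.mulVec h i) ^ 2)
    (h2 : (1 / n) * ∑ i, (X.mulVec h i) ^ 2 ≤
      (lam / α) * (Real.sqrt k * Real.sqrt (∑ j ∈ S0, (h j) ^ 2) + ∑ j ∈ S0ᶜ, |h j|)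
      + lam * ∑ j ∈ S0, |h j| - lam * ∑ j ∈ S0ᶜ, |h j|) :
    Real.sqrt (∑ j, (h j) ^ 2) ≤ 2 * lam * Real.sqrt k / κ := by
  set A := Real.sqrt (∑ j, (h j) ^ 2) with hAdef
  have hAnn : 0 ≤ A := Real.sqrt_nonneg _
  have hsum_nn : 0 ≤ ∑ j, (h j) ^ 2 := Finset.sum_nonneg fun _ _ => sq_nonneg _
  have hA2 : A ^ 2 = ∑ j, (h j) ^ 2 := Real.sq_sqrt hsum_nn
  have hknn : (0:ℝ) ≤ Real.sqrt k := Real.sqrt_nonneg _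
  have hB_le : Real.sqrt (∑ j ∈ S0, (h j) ^ 2) ≤ A := by
    apply Real.sqrt_le_sqrt
    exact Finset.sum_le_sum_of_subset_of_nonneg (Finset.subset_univ _)
      (fun _ _ _ => sq_nonneg _)
  have hS1 : ∑ j ∈ S0, |h j| ≤ Real.sqrt k * A := by
    have cs : (∑ j ∈ S0, |h j|) ^ 2 ≤ S0.card * ∑ j ∈ S0, |h j| ^ 2 :=
      sq_sum_le_card_mul_sum_sq
    simp only [hcard, sq_abs] at cs
    have h1' : ∑ j ∈ S0, |h j| ≤ Real.sqrt ((k : ℝ) * ∑ j ∈ S0, (h j) ^ 2) := by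
      exact Real.le_sqrt_of_sq_le cs
    calc ∑ j ∈ S0, |h j| ≤ Real.sqrt ((k : ℝ) * ∑ j ∈ S0, (h j) ^ 2) := h1'
      _ = Real.sqrt k * Real.sqrt (∑ j ∈ S0, (h j) ^ 2) :=
          Real.sqrt_mul (Nat.cast_nonneg k) _
      _ ≤ Real.sqrt k * A := by
          exact mul_le_mul_of_nonneg_left hB_le hknn
  have hT_nn : 0 ≤ ∑ j ∈ S0ᶜ, |h j| := Finset.sum_nonneg fun _ _ => abs_nonneg _
  have hlα : lam / α ≤ lam / 2 := by
    apply div_le_div_of_nonneg_left hlam.le (by norm_num) hα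
  have hαpos : (0:ℝ) < α := lt_of_lt_of_le (by norm_num) hα
  have key : κ * A ^ 2 ≤ 2 * lam * Real.sqrt k * A := by
    rw [hA2]
    calc κ * ∑ j, (h j) ^ 2 ≤ _ := le_trans h1 h2
      _ ≤ (lam / 2) * (Real.sqrt k * A + ∑ j ∈ S0ᶜ, |h j|)
          + lam * (Real.sqrt k * A) - lam * ∑ j ∈ S0ᶜ, |h j| := by
        have e1 : lam / α * (Real.sqrt k * Real.sqrt (∑ j ∈ S0, (h j) ^ 2) + ∑ j ∈ S0ᶜ, |h j|)
            ≤ lam / 2 * (Real.sqrt k * A + ∑ j ∈ S0ᶜ, |h j|) := by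
          apply mul_le_mul hlα _ _ (by positivity)
          · gcongr
          · exact add_nonneg (mul_nonneg hknn (Real.sqrt_nonneg _)) hT_nn
        have e2 : lam * ∑ j ∈ S0, |h j| ≤ lam * (Real.sqrt k * A) :=
          mul_le_mul_of_nonneg_left hS1 hlam.le
        linarith
      _ ≤ 2 * lam * Real.sqrt k * A := by
        nlinarith [mul_nonneg hknn hAnn]
  rcases eq_or_lt_of_le hAnn with hz | hz
  · rw [← hz]
    positivity
  · rw [le_div_iff₀ hκ]
    nlinarith
end
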